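/- Suppose M is a 4×4 positive semidefinite matrix acting on Alice's system such that (M⊗I)|ψ⟩ ⊥ (M⊗I)|ψ'⟩ for all distinct |ψ⟩,|ψ'⟩ in S₁ — equivalently ⟨ψ|(M†M⊗I)|ψ'⟩ = 0 for M a measurement Kraus operator with N := M†M. Then N = diag(δ₀, γ, γ, γ) for some δ₀, γ ≥ 0; i.e., every orthogonality-preserving measurement operator of Alice on S₁ has this two-block diagonal form. -/

import Mathlib

open scoped BigOperators ComplexOrder

noncomputable section

def e4 (i : Fin 4) : Fin 4 → ℂ := fun j => if j = i then 1 else 0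
def dot4 (x y : Fin 4 → ℂ) : ℂ := ∑ i, star (x i) * y i
def p4 (i j : Fin 4) : Fin 4 → ℂ := ((Real.sqrt 2 : ℂ))⁻¹ • (e4 i + e4 j)
def m4 (i j : Fin 4) : Fin 4 → ℂ := ((Real.sqrt 2 : ℂ))⁻¹ • (e4 i - e4 j)

/-- The 16 product states of `S₁ ⊂ ℂ⁴⊗ℂ⁴`, as (Alice factor, Bob factor) pairs. -/
def S1 : Fin 16 → (Fin 4 → ℂ) × (Fin 4 → ℂ) :=
  ![(e4 0, p4 0 1), (e4 0, m4 0 1), (e4 0, p4 2 3), (e4 0, m4 2 3),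
    (p4 1 2, e4 0), (m4 1 2, e4 0), (e4 3, e4 0),
    (e4 1, p4 1 2), (e4 1, m4 1 2), (e4 1, e4 3),
    (p4 2 3, e4 1), (m4 2 3, e4 1),
    (e4 2, p4 2 3), (e4 2, m4 2 3),
    (e4 3, e4 2), (e4 3, e4 3)]

/-!
If the Bob factors of two states of `S₁` are not orthogonal, the Alice factors must satisfy
`⟨a|N|a'⟩ = 0`. Six such pairs kill the entries of `N` above the diagonal, and Hermiticity
kills those below. The pairs `|1±2⟩|0⟩` and `|2±3⟩|1⟩` then give `N₁₁ = N₂₂ = N₃₃`, and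
positivity makes the diagonal real and nonnegative.
-/

open Matrix

theorem Matrix.IsHermitian.eq_diagonal_of_upper_eq_zero {n α : Type*} [LinearOrder n]
    [AddMonoid α] [StarAddMonoid α] {A : Matrix n n α} (hA : A.IsHermitian)
    (h : ∀ i j, i < j → A i j = 0) : A = diagonal A.diag := by
  ext i j
  rcases lt_trichotomy i j with hij | rfl | hij
  · simp [h i j hij, hij.ne]
  · simp
  · simp [← hA.apply i j, h j i hij, hij.ne']

lemma e4_eq_single (i : Fin 4) : e4 i = Pi.single i 1 := by
  ext j
  simp [e4, Pi.single_apply]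

lemma dot4_eq_star_dotProduct (x y : Fin 4 → ℂ) : dot4 x y = star x ⬝ᵥ y := rfl

lemma dot4_e4_left (a : Fin 4) (x : Fin 4 → ℂ) : dot4 (e4 a) x = x a := by
  simp [dot4_eq_star_dotProduct, e4_eq_single]

lemma dot4_p4_left (a b : Fin 4) (x : Fin 4 → ℂ) :
    dot4 (p4 a b) x = (Real.sqrt 2 : ℂ)⁻¹ * (x a + x b) := by
  simp [dot4_eq_star_dotProduct, p4, star_smul, e4_eq_single, add_dotProduct, mul_add]

lemma dot4_m4_left (a b : Fin 4) (x : Fin 4 → ℂ) :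
    dot4 (m4 a b) x = (Real.sqrt 2 : ℂ)⁻¹ * (x a - x b) := by
  simp [dot4_eq_star_dotProduct, m4, star_smul, e4_eq_single, sub_dotProduct]

lemma dot4_e4_self (a : Fin 4) : dot4 (e4 a) (e4 a) = 1 := by
  simp [dot4_e4_left, e4]

lemma dot4_p4_e4_left {a b : Fin 4} (hab : a ≠ b) :
    dot4 (p4 a b) (e4 a) = (Real.sqrt 2 : ℂ)⁻¹ := by
  simp [dot4_p4_left, e4, hab.symm]

lemma dot4_p4_self {a b : Fin 4} (hab : a ≠ b) : dot4 (p4 a b) (p4 a b) = 1 := by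
  rw [dot4_p4_left]
  simp only [p4, e4, Pi.smul_apply, Pi.add_apply, if_pos, if_neg hab, if_neg hab.symm,
    smul_eq_mul, mul_one, add_zero, zero_add]
  rw [← two_mul, mul_left_comm, ← mul_inv, ← Complex.ofReal_mul, Real.mul_self_sqrt zero_le_two]
  norm_num

lemma mulVec_e4 (N : Matrix (Fin 4) (Fin 4) ℂ) (b : Fin 4) : N *ᵥ e4 b = N.col b := by
  rw [e4_eq_single, mulVec_single_one]

lemma mulVec_p4 (N : Matrix (Fin 4) (Fin 4) ℂ) (a b : Fin 4) :
    N *ᵥ p4 a b = (Real.sqrt 2 : ℂ)⁻¹ • (N.col a + N.col b) := by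
  rw [p4, mulVec_smul, mulVec_add, mulVec_e4, mulVec_e4]

lemma mulVec_m4 (N : Matrix (Fin 4) (Fin 4) ℂ) (a b : Fin 4) :
    N *ᵥ m4 a b = (Real.sqrt 2 : ℂ)⁻¹ • (N.col a - N.col b) := by
  rw [m4, mulVec_smul, mulVec_sub, mulVec_e4, mulVec_e4]

def PreservesOrthogonalityS1 (N : Matrix (Fin 4) (Fin 4) ℂ) : Prop :=
  ∀ i j : Fin 16, i ≠ j → dot4 (S1 i).1 (N *ᵥ (S1 j).1) * dot4 (S1 i).2 (S1 j).2 = 0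

namespace PreservesOrthogonalityS1

variable {N : Matrix (Fin 4) (Fin 4) ℂ} (h : PreservesOrthogonalityS1 N)
include h

lemma upper_eq_zero : ∀ i j : Fin 4, i < j → N i j = 0 := by
  have h02 : N 0 2 = 0 := by
    have h' : dot4 (e4 0) (N *ᵥ e4 2) * dot4 (p4 2 3) (p4 2 3) = 0 := h 2 12 (by decide)
    simpa [dot4_e4_left, mulVec_e4, dot4_p4_self] using h'
  have h03 : N 0 3 = 0 := by
    have h' : dot4 (e4 0) (N *ᵥ e4 3) * dot4 (p4 0 1) (e4 0) = 0 := h 0 6 (by decide)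
    simpa [dot4_e4_left, mulVec_e4, dot4_p4_e4_left] using h'
  have h01 : N 0 1 = 0 := by
    have h' : dot4 (e4 0) (N *ᵥ p4 1 2) * dot4 (p4 0 1) (e4 0) = 0 := h 0 4 (by decide)
    simpa [dot4_e4_left, mulVec_p4, dot4_p4_e4_left, h02] using h'
  have h13_add_h23 : N 1 3 + N 2 3 = 0 := by
    have h' : dot4 (p4 1 2) (N *ᵥ e4 3) * dot4 (e4 0) (e4 0) = 0 := h 4 6 (by decide)
    simpa [dot4_p4_left, mulVec_e4, dot4_e4_self] using h'
  have h13_sub_h23 : N 1 3 - N 2 3 = 0 := by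
    have h' : dot4 (m4 1 2) (N *ᵥ e4 3) * dot4 (e4 0) (e4 0) = 0 := h 5 6 (by decide)
    simpa [dot4_m4_left, mulVec_e4, dot4_e4_self] using h'
  have h13 : N 1 3 = 0 := by linear_combination (h13_add_h23 + h13_sub_h23) / 2
  have h23 : N 2 3 = 0 := by linear_combination (h13_add_h23 - h13_sub_h23) / 2
  have h12 : N 1 2 = 0 := by
    have h' : dot4 (e4 1) (N *ᵥ p4 2 3) * dot4 (p4 1 2) (e4 1) = 0 := h 7 10 (by decide)
    simpa [dot4_e4_left, mulVec_p4, dot4_p4_e4_left, h13] using h'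
  intro i j hij
  fin_cases i <;> fin_cases j <;> first | exact absurd hij (by decide) | assumption

lemma diag_eq (hN : N.IsHermitian) : N 2 2 = N 1 1 ∧ N 3 3 = N 1 1 := by
  have hup := h.upper_eq_zero
  have hlow : ∀ i j : Fin 4, i < j → N j i = 0 := fun i j hij => by
    rw [← hN.apply, hup i j hij, star_zero]
  have h11_sub_h22 : N 1 1 - N 2 2 = 0 := by
    have h' : dot4 (p4 1 2) (N *ᵥ m4 1 2) * dot4 (e4 0) (e4 0) = 0 := h 4 5 (by decide)
    simpa [dot4_e4_self, mulVec_m4, dot4_p4_left, ← mul_add, ← sub_eq_add_neg, ← mul_sub,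
      hup 1 2 (by decide), hlow 1 2 (by decide)] using h'
  have h22_sub_h33 : N 2 2 - N 3 3 = 0 := by
    have h' : dot4 (p4 2 3) (N *ᵥ m4 2 3) * dot4 (e4 1) (e4 1) = 0 := h 10 11 (by decide)
    simpa [dot4_e4_self, mulVec_m4, dot4_p4_left, ← mul_add, ← sub_eq_add_neg, ← mul_sub,
      hup 2 3 (by decide), hlow 2 3 (by decide)] using h'
  exact ⟨by linear_combination -h11_sub_h22, by linear_combination -h11_sub_h22 - h22_sub_h33⟩

end PreservesOrthogonalityS1

/-- if `N = M†M` is PSD and the measurement `M` on Alice's side preserves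
orthogonality of `S₁`, i.e. `⟨a|N|a'⟩·⟨b|b'⟩ = 0` for all distinct product pairs in `S₁`,
then `N = diag(δ₀, γ, γ, γ)` for some `δ₀, γ ≥ 0`. -/
theorem stmt10 (N : Matrix (Fin 4) (Fin 4) ℂ) (hN : N.PosSemidef)
    (h : ∀ i j : Fin 16, i ≠ j →
      dot4 (S1 i).1 (N.mulVec (S1 j).1) * dot4 (S1 i).2 (S1 j).2 = 0) :
    ∃ δ γ : ℝ, 0 ≤ δ ∧ 0 ≤ γ ∧
      N = Matrix.diagonal ![(δ : ℂ), (γ : ℂ), (γ : ℂ), (γ : ℂ)] := by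
  have horth : PreservesOrthogonalityS1 N := h
  have hdiag := hN.isHermitian.eq_diagonal_of_upper_eq_zero horth.upper_eq_zero
  obtain ⟨h22, h33⟩ := horth.diag_eq hN.isHermitian
  obtain ⟨δ, hδ, hδN⟩ := RCLike.nonneg_iff_exists_ofReal.mp (hN.diag_nonneg (i := 0))
  obtain ⟨γ, hγ, hγN⟩ := RCLike.nonneg_iff_exists_ofReal.mp (hN.diag_nonneg (i := 1))
  refine ⟨δ, γ, hδ, hγ, hdiag.trans ?_⟩
  congr 1
  ext i
  fin_cases i <;> simp [h22, h33, ← hδN, ← hγN]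

end
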